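/- arXiv:1309.2002 — 3 statements merged into one kernel-verified Lean document; each statement's English description precedes it below -/
import Mathlib

section
/- Let M ≥ 1 and consider subsystems indexed by i ∈ {1,…,M} with state dimensions n_i, and let Ā be the n×n real matrix (n = Σ_i n_i) with blocks Ā_{ij} ∈ ℝ^{n_i×n_j}. For each i let E_i ⊂ ℝ^{n_i} be a zonotope centered at the origin with dual representation E_i = {x : H_i x ≤ 1} = {Ξ_i d : ‖d‖_∞ ≤ 1}, where H_i has full column rank n_i and H_i^♭ denotes a left inverse of H_i (H_i^♭ H_i = I). Assume: (a) every diagonal block Ā_{ii} is Schur, and (b) for every i, β_i := Σ_{j≠i} Σ_{k=0}^∞ ‖H_i Ā_{ii}^k Ā_{ij} H_j^♭‖_∞ < 1 (the series being convergent). Then the full matrix Ā is Schur, i.e., its spectral radius is strictly less than 1. -/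
open scoped BigOperators
open Matrix

noncomputable section

/-- Induced infinity norm of a real matrix: maximum over rows of the sum of
absolute values of the entries of that row. -/
def matInfNorm {m n : Type*} [Fintype m] [Fintype n] (A : Matrix m n ℝ) : ℝ :=
  ⨆ i, ∑ j, |A i j|

/-- Infinity norm of a vector. -/
def vecInfNorm {m : Type*} [Fintype m] (v : m → ℝ) : ℝ := ⨆ i, |v i|

/-- A real square matrix is Schur if all of its complex eigenvalues lie strictly
inside the unit circle. -/
def IsSchur {ι : Type*} [Fintype ι] [DecidableEq ι] (A : Matrix ι ι ℝ) : Prop :=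
  ∀ μ ∈ spectrum ℂ (A.map (algebraMap ℝ ℂ)), ‖μ‖ < 1

/-! If `Ā v = μ v` with `‖μ‖ ≥ 1` and `v ≠ 0`, each block `e i` of `v` satisfies
`(μ - Ā i i) e i = ∑_{j ≠ i} Ā i j e j`. Gelfand's formula makes `‖(Ā i i)^k‖` summable, so the
Neumann series `e i = ∑_k μ⁻¹^(k+1) (Ā i i)^k ∑_{j ≠ i} Ā i j e j` converges absolutely.
Inserting `e j = H♭ j (H j e j)` bounds `‖H i e i‖` by `∑_{j ≠ i} γ i j ‖H j e j‖` with
`∑_{j ≠ i} γ i j = β i < 1`; at a block where `‖H i e i‖` is maximal this forces every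
`H j e j`, hence every `e j = H♭ j (H j e j)`, to vanish. -/

open Filter Topology Finset

attribute [local instance] Matrix.linftyOpNormedAddCommGroup Matrix.linftyOpNormedRing
  Matrix.linftyOpNormedAlgebra

theorem summable_norm_pow_of_spectralRadius_lt_one {A : Type*} [NormedRing A]
    [NormedAlgebra ℂ A] [CompleteSpace A] {a : A} (ha : spectralRadius ℂ a < 1) :
    Summable fun k : ℕ => ‖a ^ k‖ := by
  obtain ⟨r, hr0, har, hr1⟩ := ENNReal.lt_iff_exists_real_btwn.mp ha
  rw [← ENNReal.ofReal_one, ENNReal.ofReal_lt_ofReal_iff one_pos] at hr1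
  refine .of_norm_bounded_eventually_nat (summable_geometric_of_lt_one hr0 hr1) ?_
  filter_upwards [(spectrum.pow_norm_pow_one_div_tendsto_nhds_spectralRadius a).eventually_lt_const
    har, eventually_gt_atTop 0] with k hk hk0
  rw [ENNReal.ofReal_lt_ofReal_iff', one_div] at hk
  rw [norm_norm, ← Real.rpow_natCast]
  exact ((Real.rpow_inv_lt_iff_of_pos (norm_nonneg _) hr0 (by exact_mod_cast hk0)).mp hk.1).le

theorem norm_inv_pow_smul_le {𝕜 E : Type*} [NormedField 𝕜] [SeminormedAddCommGroup E]
    [NormedSpace 𝕜 E] {μ : 𝕜} (hμ : 1 ≤ ‖μ‖) (k : ℕ) (v : E) : ‖μ⁻¹ ^ k • v‖ ≤ ‖v‖ := by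
  rw [norm_smul, norm_pow, norm_inv]
  exact mul_le_of_le_one_left (norm_nonneg v)
    (pow_le_one₀ (by positivity) (inv_le_one_of_one_le₀ hμ))

namespace Matrix

theorem exists_mulVec_eq_smul_of_mem_spectrum {K ι : Type*} [Field K] [Fintype ι]
    [DecidableEq ι] {B : Matrix ι ι K} {μ : K} (hμ : μ ∈ spectrum K B) :
    ∃ v ≠ 0, B *ᵥ v = μ • v := by
  rw [← spectrum_toLin', ← Module.End.hasEigenvalue_iff_mem_spectrum] at hμ
  obtain ⟨v, hv⟩ := hμ.exists_hasEigenvector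
  exact ⟨v, hv.2, by simpa using hv.apply_eq_smul⟩

theorem of_sigma_mulVec_apply {R ι : Type*} [NonUnitalNonAssocSemiring R] [Fintype ι]
    {n : ι → Type*} [∀ i, Fintype (n i)] (A : ∀ i j, Matrix (n i) (n j) R)
    (v : (Σ i, n i) → R) (i : ι) (t : n i) :
    (of (fun p q : Σ i, n i => A p.1 q.1 p.2 q.2) *ᵥ v) ⟨i, t⟩ =
      ∑ j, (A i j *ᵥ fun s => v ⟨j, s⟩) t := by
  simp [mulVec, dotProduct, Fintype.sum_sigma]

theorem map_mul_map_eq_one {R S m n : Type*} [Semiring R] [Semiring S] [Fintype n]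
    [DecidableEq m] (f : R →+* S) {B : Matrix m n R} {C : Matrix n m R} (h : B * C = 1) :
    B.map f * C.map f = 1 := by
  rw [← Matrix.map_mul, h, Matrix.map_one _ (map_zero f) (map_one f)]

theorem norm_map_algebraMap_eq_matInfNorm {m n : Type*} [Fintype m] [Fintype n]
    (B : Matrix m n ℝ) : ‖B.map (algebraMap ℝ ℂ)‖ = matInfNorm B := by
  rw [linfty_opNorm_def, Finset.sup_univ_eq_ciSup, NNReal.coe_iSup, matInfNorm]
  simp

theorem hasSum_inv_pow_smul_pow_mulVec {𝕜 ι : Type*} [NormedField 𝕜] [CompleteSpace 𝕜]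
    [Fintype ι] [DecidableEq ι] {a : Matrix ι ι 𝕜} (ha : Summable fun k : ℕ => ‖a ^ k‖)
    {μ : 𝕜} (hμ : 1 ≤ ‖μ‖) {e r : ι → 𝕜} (h : μ • e = a *ᵥ e + r) :
    HasSum (fun k : ℕ => μ⁻¹ ^ (k + 1) • (a ^ k *ᵥ r)) e := by
  have hμ0 : μ ≠ 0 := norm_pos_iff.mp (one_pos.trans_le hμ)
  have hsummable : Summable fun k : ℕ => μ⁻¹ ^ (k + 1) • (a ^ k *ᵥ r) :=
    .of_norm_bounded (ha.mul_right ‖r‖) fun k =>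
      (norm_inv_pow_smul_le hμ _ _).trans (linfty_opNorm_mulVec _ _)
  have hpartial : ∀ N, ∑ k ∈ range N, μ⁻¹ ^ (k + 1) • (a ^ k *ᵥ r) =
      e - μ⁻¹ ^ N • (a ^ N *ᵥ e) := by
    intro N
    induction N with
    | zero => simp
    | succ N ih =>
      have hμN : μ⁻¹ ^ (N + 1) * μ = μ⁻¹ ^ N := by
        rw [pow_succ, mul_assoc, inv_mul_cancel₀ hμ0, mul_one]
      rw [sum_range_succ, ih, eq_sub_of_add_eq' h.symm, mulVec_sub, mulVec_smul, mulVec_mulVec,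
        ← pow_succ, smul_sub, smul_smul, hμN]
      abel
  have htail : Tendsto (fun N : ℕ => μ⁻¹ ^ N • (a ^ N *ᵥ e)) atTop (𝓝 0) := by
    refine squeeze_zero_norm (fun N => ?_) (by simpa using ha.tendsto_atTop_zero.mul_const ‖e‖)
    exact (norm_inv_pow_smul_le hμ _ _).trans (linfty_opNorm_mulVec _ _)
  rw [hsummable.hasSum_iff_tendsto_nat]
  simp only [hpartial]
  simpa using (tendsto_const_nhds (x := e)).sub htail

end Matrix

theorem matInfNorm_nonneg {m n : Type*} [Fintype m] [Fintype n] (B : Matrix m n ℝ) :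
    0 ≤ matInfNorm B :=
  Matrix.norm_map_algebraMap_eq_matInfNorm B ▸ norm_nonneg _

namespace IsSchur

variable {ι : Type*} [Fintype ι] [DecidableEq ι] {B : Matrix ι ι ℝ}

theorem spectralRadius_lt_one (hB : IsSchur B) :
    spectralRadius ℂ (B.map (algebraMap ℝ ℂ)) < 1 := by
  rcases (spectrum ℂ (B.map (algebraMap ℝ ℂ))).eq_empty_or_nonempty with h | h
  · rw [spectralRadius, h]
    simp
  · exact spectrum.spectralRadius_lt_of_forall_lt_of_nonempty h fun μ hμ => by
      exact_mod_cast hB μ hμ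

theorem summable_norm_pow (hB : IsSchur B) :
    Summable fun k : ℕ => ‖(B.map (algebraMap ℝ ℂ)) ^ k‖ :=
  summable_norm_pow_of_spectralRadius_lt_one hB.spectralRadius_lt_one

end IsSchur

theorem eq_zero_of_le_sum_mul_of_sum_lt_one {ι : Type*} [Finite ι] {x : ι → ℝ}
    {γ : ι → ι → ℝ} {s : ι → Finset ι} (hx0 : 0 ≤ x) (hγ0 : ∀ i j, 0 ≤ γ i j)
    (hx : ∀ i, x i ≤ ∑ j ∈ s i, γ i j * x j) (hγ : ∀ i, ∑ j ∈ s i, γ i j < 1) : x = 0 := by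
  funext j
  have : Nonempty ι := ⟨j⟩
  obtain ⟨i, hi⟩ := Finite.exists_max x
  have hxi : x i ≤ (∑ j ∈ s i, γ i j) * x i := calc
    x i ≤ ∑ j ∈ s i, γ i j * x j := hx i
    _ ≤ ∑ j ∈ s i, γ i j * x i := sum_le_sum fun j _ => mul_le_mul_of_nonneg_left (hi j) (hγ0 i j)
    _ = (∑ j ∈ s i, γ i j) * x i := (sum_mul _ _ _).symm
  have : x i ≤ 0 := by nlinarith [hγ i]
  exact le_antisymm ((hi j).trans this) (hx0 j)

section BlockMatrix

variable {ι : Type*} [Fintype ι] [DecidableEq ι] {n τ : ι → Type*} [∀ i, Fintype (n i)]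
  [∀ i, DecidableEq (n i)] [∀ i, Fintype (τ i)]
  (A : ∀ i j, Matrix (n i) (n j) ℝ) (H : ∀ i, Matrix (τ i) (n i) ℝ)
  (Hflat : ∀ i, Matrix (n i) (τ i) ℝ)

theorem norm_mulVec_block_le_of_eigen (hleft : ∀ j, Hflat j * H j = 1) (i : ι)
    (hSchur : IsSchur (A i i))
    (hSummable : ∀ j, j ≠ i →
      Summable (fun k : ℕ => matInfNorm (H i * (A i i) ^ k * A i j * Hflat j)))
    {μ : ℂ} (hμ : 1 ≤ ‖μ‖) (e : ∀ j, n j → ℂ)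
    (he : μ • e i = ∑ j, (A i j).map (algebraMap ℝ ℂ) *ᵥ e j) :
    ‖(H i).map (algebraMap ℝ ℂ) *ᵥ e i‖ ≤ ∑ j ∈ univ.erase i,
      (∑' k : ℕ, matInfNorm (H i * (A i i) ^ k * A i j * Hflat j)) *
        ‖(H j).map (algebraMap ℝ ℂ) *ᵥ e j‖ := by
  set r := ∑ j ∈ univ.erase i, (A i j).map (algebraMap ℝ ℂ) *ᵥ e j
  have hdiag : μ • e i = (A i i).map (algebraMap ℝ ℂ) *ᵥ e i + r := by
    rw [he, ← add_sum_erase _ _ (mem_univ i)]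
  have hexp := (hasSum_inv_pow_smul_pow_mulVec hSchur.summable_norm_pow hμ hdiag).map
    ((H i).map (algebraMap ℝ ℂ)).mulVecLin (LinearMap.continuous_of_finiteDimensional _)
  refine hexp.norm_le_of_bounded (hasSum_sum fun j hj =>
    ((hSummable j (ne_of_mem_erase hj)).hasSum).mul_right _) fun k => ?_
  have hterm : ∀ j, (H i).map (algebraMap ℝ ℂ) *ᵥ ((A i i).map (algebraMap ℝ ℂ) ^ k *ᵥ
      ((A i j).map (algebraMap ℝ ℂ) *ᵥ e j)) =
      (H i * A i i ^ k * A i j * Hflat j).map (algebraMap ℝ ℂ) *ᵥ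
        ((H j).map (algebraMap ℝ ℂ) *ᵥ e j) := by
    intro j
    have hproj := map_mul_map_eq_one (algebraMap ℝ ℂ) (hleft j)
    simp only [Matrix.map_mul, ← RingHom.mapMatrix_apply, map_pow, mulVec_mulVec,
      Matrix.mul_assoc]
    simp only [RingHom.mapMatrix_apply, hproj, Matrix.mul_one]
  calc ‖((H i).map (algebraMap ℝ ℂ)).mulVecLin
          (μ⁻¹ ^ (k + 1) • ((A i i).map (algebraMap ℝ ℂ) ^ k *ᵥ r))‖
      ≤ ‖(H i).map (algebraMap ℝ ℂ) *ᵥ ((A i i).map (algebraMap ℝ ℂ) ^ k *ᵥ r)‖ := by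
        rw [mulVecLin_apply, mulVec_smul]
        exact norm_inv_pow_smul_le hμ _ _
    _ ≤ ∑ j ∈ univ.erase i, ‖(H i * A i i ^ k * A i j * Hflat j).map (algebraMap ℝ ℂ) *ᵥ
        ((H j).map (algebraMap ℝ ℂ) *ᵥ e j)‖ := by
        simp only [r, mulVec_sum, hterm]
        exact norm_sum_le _ _
    _ ≤ _ := sum_le_sum fun j _ => (linfty_opNorm_mulVec _ _).trans_eq
        (by rw [norm_map_algebraMap_eq_matInfNorm])

end BlockMatrix

theorem prop1_part_I_general
    (M : ℕ)
    (n τ : Fin M → ℕ)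
    (A : ∀ i j : Fin M, Matrix (Fin (n i)) (Fin (n j)) ℝ)
    (H : ∀ i, Matrix (Fin (τ i)) (Fin (n i)) ℝ)
    (Hflat : ∀ i, Matrix (Fin (n i)) (Fin (τ i)) ℝ)
    -- each `H i` has full column rank and `Hflat i` is a left inverse of `H i`
    (hleft : ∀ i, Hflat i * H i = 1)
    -- (a) each diagonal block is Schur
    (hSchur : ∀ i, IsSchur (A i i))
    -- (b) the series defining `β i` converge and `β i < 1`
    (hSummable : ∀ i j, j ≠ i →
      Summable (fun k : ℕ => matInfNorm (H i * (A i i) ^ k * A i j * Hflat j)))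
    (hbeta : ∀ i,
      ∑ j ∈ Finset.univ.erase i, ∑' k : ℕ,
        matInfNorm (H i * (A i i) ^ k * A i j * Hflat j) < 1) :
    IsSchur (Matrix.of fun p q : Σ i, Fin (n i) => A p.1 q.1 p.2 q.2) := by
  intro μ hμ
  by_contra! hμ1
  obtain ⟨v, hv0, hv⟩ := exists_mulVec_eq_smul_of_mem_spectrum hμ
  set e : ∀ i, Fin (n i) → ℂ := fun i t => v ⟨i, t⟩
  have hblock : ∀ i, μ • e i = ∑ j, (A i j).map (algebraMap ℝ ℂ) *ᵥ e j := fun i =>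
    funext fun t => by
      rw [Finset.sum_apply]
      exact (congrFun hv ⟨i, t⟩).symm.trans
        (of_sigma_mulVec_apply (fun i j => (A i j).map (algebraMap ℝ ℂ)) v i t)
  have hw : (fun i => ‖(H i).map (algebraMap ℝ ℂ) *ᵥ e i‖) = 0 :=
    eq_zero_of_le_sum_mul_of_sum_lt_one (fun i => norm_nonneg _)
      (fun i j => tsum_nonneg fun k => matInfNorm_nonneg _)
      (fun i => norm_mulVec_block_le_of_eigen A H Hflat hleft i (hSchur i) (hSummable i) hμ1 e
        (hblock i)) hbeta
  refine hv0 (funext fun ⟨i, t⟩ => ?_)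
  have he : e i = 0 := by
    rw [← one_mulVec (e i), ← map_mul_map_eq_one (algebraMap ℝ ℂ) (hleft i), ← mulVec_mulVec,
      norm_eq_zero.mp (congrFun hw i), mulVec_zero]
  exact congrFun he t

/-- Proposition 1, part (I): under the small-gain conditions `β i < 1` and Schurness of
the diagonal blocks, the full block matrix `Ā` is Schur. -/
theorem prop1_part_I
    (M : ℕ) (hM : 1 ≤ M)
    (n τ nb : Fin M → ℕ)
    (A : ∀ i j : Fin M, Matrix (Fin (n i)) (Fin (n j)) ℝ)
    (H : ∀ i, Matrix (Fin (τ i)) (Fin (n i)) ℝ)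
    (Hflat : ∀ i, Matrix (Fin (n i)) (Fin (τ i)) ℝ)
    (Ξ : ∀ i, Matrix (Fin (n i)) (Fin (nb i)) ℝ)
    (E : ∀ i, Set (Fin (n i) → ℝ))
    -- each `H i` has full column rank and `Hflat i` is a left inverse of `H i`
    (hrank : ∀ i, (H i).rank = n i)
    (hleft : ∀ i, Hflat i * H i = 1)
    -- dual representation of the zonotopes `E i`
    (hEdual : ∀ i, E i = {x | ∀ t, (H i).mulVec x t ≤ 1})
    (hEgen : ∀ i, E i = {x | ∃ d : Fin (nb i) → ℝ, vecInfNorm d ≤ 1 ∧ x = (Ξ i).mulVec d})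
    -- (a) each diagonal block is Schur
    (hSchur : ∀ i, IsSchur (A i i))
    -- (b) the series defining `β i` converge and `β i < 1`
    (hSummable : ∀ i j, j ≠ i →
      Summable (fun k : ℕ => matInfNorm (H i * (A i i) ^ k * A i j * Hflat j)))
    (hbeta : ∀ i,
      ∑ j ∈ Finset.univ.erase i, ∑' k : ℕ,
        matInfNorm (H i * (A i i) ^ k * A i j * Hflat j) < 1) :
    IsSchur (Matrix.of fun p q : Σ i, Fin (n i) => A p.1 q.1 p.2 q.2) :=
  prop1_part_I_general M n τ A H Hflat hleft hSchur hSummable hbeta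
end
end

section
/- Let M ≥ 1 and consider blocks Ā_{ij} ∈ ℝ^{n_i×n_j}, zonotopes E_i = {x : H_i x ≤ 1} = {Ξ_i d : ‖d‖_∞ ≤ 1} ⊂ ℝ^{n_i} centered at the origin with H_i of full column rank and left inverse H_i^♭, zonotopes W_i = {Δ_i l : ‖l‖_∞ ≤ 1} ⊂ ℝ^{r_i} centered at the origin, and matrices D_i ∈ ℝ^{n_i×r_i}. For each i let Ψ_i be the horizontal concatenation [Ā_{i j_1} Ξ_{j_1}, …, Ā_{i j_z} Ξ_{j_z}, D_i Δ_i] over the indices j_1,…,j_z ≠ i with Ā_{ij} ≠ 0. Assume every Ā_{ii} is Schur, β_i := Σ_{j≠i} Σ_{k=0}^∞ ‖H_i Ā_{ii}^k Ā_{ij} H_j^♭‖_∞ < 1 for all i, and γ_i := Σ_{k=0}^∞ ‖H_i Ā_{ii}^k Ψ_i‖_∞ < 1 for all i. Then for every i there exists a nonempty RPI set S_i ⊆ E_i for the dynamics e_i⁺ = Ā_{ii} e_i + ṽ_i with ṽ_i ranging over Ṽ_i = (⊕_{j≠i} Ā_{ij} E_j) ⊕ D_i W_i, and the product S = ∏_i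 S_i is an RPI set for the collective dynamics e⁺ = Ā e + D w with w ∈ ∏_i W_i, where Ā is the block matrix with blocks Ā_{ij} and D = diag(D_1,…,D_M). -/
/-!
Take for `S i` the set of all convergent sums `∑ₖ Āᵢᵢᵏ Ψᵢ dₖ` with `‖dₖ‖_∞ ≤ 1`, i.e. the
states reachable from `0` under `e⁺ = Āᵢᵢ e + Ψᵢ d`. Every admissible disturbance `ṽ` equals
`Ψᵢ d₀` for some `‖d₀‖_∞ ≤ 1`, and prepending `d₀` to a coefficient sequence of `x` exhibits
`Āᵢᵢ x + ṽ` as such a sum: `S i` is RPI. Applying `Hᵢ` termwise bounds every row of `Hᵢ x` by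
`γᵢ < 1`, so `S i ⊆ Eᵢ`; then the collective dynamics only feeds each block a disturbance
from `Ṽᵢ`, and the product is RPI as well.
-/

open scoped BigOperators Classical
open Matrix

noncomputable section

/-- The matrix `Ψ i`: horizontal concatenation of the blocks `Ā_{ij} Ξ j` over the
parents `j ≠ i` with `Ā_{ij} ≠ 0`, followed by the block `D i * Δ i`. -/
def PsiMat {M : ℕ} {n nb r rb : Fin M → ℕ}
    (A : ∀ i j : Fin M, Matrix (Fin (n i)) (Fin (n j)) ℝ)
    (Ξ : ∀ i, Matrix (Fin (n i)) (Fin (nb i)) ℝ)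
    (Dm : ∀ i, Matrix (Fin (n i)) (Fin (r i)) ℝ)
    (Δ : ∀ i, Matrix (Fin (r i)) (Fin (rb i)) ℝ) (i : Fin M) :
    Matrix (Fin (n i)) ((Σ j : {j : Fin M // j ≠ i ∧ A i j ≠ 0}, Fin (nb j.1)) ⊕ Fin (rb i)) ℝ :=
  Matrix.of fun row c =>
    match c with
    | Sum.inl ⟨j, c'⟩ => (A i j.1 * Ξ j.1) row c'
    | Sum.inr c' => (Dm i * Δ i) row c'

section InfNorm

variable {m κ : Type*} [Fintype m] [Fintype κ]

lemma abs_apply_le_vecInfNorm (v : m → ℝ) (t : m) : |v t| ≤ vecInfNorm v :=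
  le_ciSup (f := fun s => |v s|) (Set.finite_range _).bddAbove t

lemma vecInfNorm_le_of_abs_apply_le {v : m → ℝ} {c : ℝ} (hc : 0 ≤ c) (hv : ∀ t, |v t| ≤ c) :
    vecInfNorm v ≤ c :=
  Real.iSup_le hv hc

lemma abs_mulVec_apply_le_matInfNorm (B : Matrix m κ ℝ) {v : κ → ℝ} (hv : vecInfNorm v ≤ 1)
    (t : m) : |(B *ᵥ v) t| ≤ matInfNorm B :=
  calc |(B *ᵥ v) t| = |∑ c, B t c * v c| := rfl
    _ ≤ ∑ c, |B t c| * |v c| := by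
        simpa only [abs_mul] using Finset.abs_sum_le_sum_abs (fun c => B t c * v c) Finset.univ
    _ ≤ ∑ c, |B t c| := Finset.sum_le_sum fun c _ =>
        mul_le_of_le_one_right (abs_nonneg _) ((abs_apply_le_vecInfNorm v c).trans hv)
    _ ≤ matInfNorm B :=
        le_ciSup (f := fun s => ∑ c, |B s c|) (Set.finite_range _).bddAbove t

end InfNorm

lemma HasSum.matrix_mulVec {ι κ β : Type*} [Fintype κ] {f : β → κ → ℝ} {x : κ → ℝ}
    (hf : HasSum f x) (A : Matrix ι κ ℝ) : HasSum (fun b => A *ᵥ f b) (A *ᵥ x) :=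
  hf.mapL (mulVecLin A).toContinuousLinearMap

section ReachableSet

variable {ι κ τ : Type*} [Fintype ι] [DecidableEq ι] [Fintype κ] [Fintype τ]

/-- `⊕ₖ Aᵏ B 𝔹_∞`: the states reachable from `0` under `x⁺ = A x + B d`, `‖d‖_∞ ≤ 1`. -/
def reachableSet (A : Matrix ι ι ℝ) (B : Matrix ι κ ℝ) : Set (ι → ℝ) :=
  {x | ∃ d : ℕ → κ → ℝ, (∀ k, vecInfNorm (d k) ≤ 1) ∧ HasSum (fun k => (A ^ k * B) *ᵥ d k) x}

lemma zero_mem_reachableSet (A : Matrix ι ι ℝ) (B : Matrix ι κ ℝ) : 0 ∈ reachableSet A B :=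
  ⟨0, fun _ => vecInfNorm_le_of_abs_apply_le zero_le_one fun _ => by simp,
    by simpa only [Pi.zero_apply, mulVec_zero] using hasSum_zero⟩

lemma mulVec_add_mulVec_mem_reachableSet {A : Matrix ι ι ℝ} {B : Matrix ι κ ℝ}
    {x : ι → ℝ} (hx : x ∈ reachableSet A B) {d₀ : κ → ℝ} (hd₀ : vecInfNorm d₀ ≤ 1) :
    A *ᵥ x + B *ᵥ d₀ ∈ reachableSet A B := by
  obtain ⟨d, hd, hsum⟩ := hx
  let d' : ℕ → κ → ℝ := fun k => Nat.casesOn k d₀ d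
  refine ⟨d', ?_, ?_⟩
  · rintro (_ | k)
    exacts [hd₀, hd k]
  have hshift : HasSum (fun k => (A ^ (k + 1) * B) *ᵥ d' (k + 1)) (A *ᵥ x) :=
    (hsum.matrix_mulVec A).congr_fun fun k => by
      rw [mulVec_mulVec, ← Matrix.mul_assoc, ← pow_succ']
  have hsum' := HasSum.zero_add (f := fun k => (A ^ k * B) *ᵥ d' k) hshift
  rwa [pow_zero, Matrix.one_mul, add_comm] at hsum'

lemma reachableSet_subset_of_tsum_matInfNorm_le_one {A : Matrix ι ι ℝ} {B : Matrix ι κ ℝ}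
    (H : Matrix τ ι ℝ) (hsum : Summable fun k => matInfNorm (H * A ^ k * B))
    (hle : ∑' k, matInfNorm (H * A ^ k * B) ≤ 1) :
    reachableSet A B ⊆ {x | ∀ t, (H *ᵥ x) t ≤ 1} := by
  rintro x ⟨d, hd, hx⟩ t
  have hHx : HasSum (fun k => ((H * A ^ k * B) *ᵥ d k) t) ((H *ᵥ x) t) := by
    refine (Pi.hasSum.mp (hx.matrix_mulVec H) t).congr_fun fun k => ?_
    rw [mulVec_mulVec, Matrix.mul_assoc]
  calc (H *ᵥ x) t ≤ ∑' k, matInfNorm (H * A ^ k * B) :=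
        hasSum_le (fun k => (le_abs_self _).trans (abs_mulVec_apply_le_matInfNorm _ (hd k) t))
          hHx hsum.hasSum
    _ ≤ 1 := hle

end ReachableSet

section PsiMat

variable {M : ℕ} {n nb r rb : Fin M → ℕ}
  (A : ∀ i j : Fin M, Matrix (Fin (n i)) (Fin (n j)) ℝ)
  (Ξ : ∀ i, Matrix (Fin (n i)) (Fin (nb i)) ℝ)
  (Dm : ∀ i, Matrix (Fin (n i)) (Fin (r i)) ℝ)
  (Δ : ∀ i, Matrix (Fin (r i)) (Fin (rb i)) ℝ)

lemma sum_erase_mulVec_eq_sum_ne_zero (i : Fin M) (e : ∀ j, Fin (n j) → ℝ) :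
    ∑ j ∈ Finset.univ.erase i, A i j *ᵥ e j
      = ∑ j : {j : Fin M // j ≠ i ∧ A i j ≠ 0}, A i j.1 *ᵥ e j.1 := by
  rw [← Finset.sum_subtype (Finset.univ.filter fun j => j ≠ i ∧ A i j ≠ 0) (by simp)
    (fun j => A i j *ᵥ e j)]
  refine (Finset.sum_subset (fun j hj => by simpa using (Finset.mem_filter.mp hj).2.1)
    fun j hj hj' => ?_).symm
  simp only [Finset.mem_erase, Finset.mem_filter, Finset.mem_univ, true_and, and_true,
    not_and, not_not] at hj hj'
  rw [hj' hj, zero_mulVec]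

lemma psiMat_mulVec_sumElim (i : Fin M)
    (c : ∀ j : {j : Fin M // j ≠ i ∧ A i j ≠ 0}, Fin (nb j.1) → ℝ) (l : Fin (rb i) → ℝ) :
    PsiMat A Ξ Dm Δ i *ᵥ Sum.elim (fun a => c a.1 a.2) l
      = ∑ j, A i j.1 *ᵥ (Ξ j.1 *ᵥ c j) + Dm i *ᵥ (Δ i *ᵥ l) := by
  ext t
  simp only [mulVec_mulVec, Pi.add_apply, Finset.sum_apply]
  simp only [mulVec, dotProduct, Fintype.sum_sum_type, ← Finset.univ_sigma_univ,
    Finset.sum_sigma]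
  rfl

lemma exists_psiMat_mulVec_eq (i : Fin M) {e : ∀ j, Fin (n j) → ℝ} {w : Fin (r i) → ℝ}
    (he : ∀ j ≠ i, ∃ c, vecInfNorm c ≤ 1 ∧ e j = Ξ j *ᵥ c)
    (hw : ∃ l, vecInfNorm l ≤ 1 ∧ w = Δ i *ᵥ l) :
    ∃ d, vecInfNorm d ≤ 1 ∧
      ∑ j ∈ Finset.univ.erase i, A i j *ᵥ e j + Dm i *ᵥ w = PsiMat A Ξ Dm Δ i *ᵥ d := by
  choose c hc he using fun j : {j : Fin M // j ≠ i ∧ A i j ≠ 0} => he j.1 j.2.1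
  obtain ⟨l, hl, rfl⟩ := hw
  refine ⟨Sum.elim (fun a => c a.1 a.2) l, vecInfNorm_le_of_abs_apply_le zero_le_one ?_, ?_⟩
  · rintro (⟨j, s⟩ | s)
    · exact (abs_apply_le_vecInfNorm _ s).trans (hc j)
    · exact (abs_apply_le_vecInfNorm _ s).trans hl
  · rw [psiMat_mulVec_sumElim, sum_erase_mulVec_eq_sum_ne_zero]
    simp only [he]

end PsiMat
theorem prop2_general
    (M : ℕ)
    (n τ nb r rb : Fin M → ℕ)
    (A : ∀ i j : Fin M, Matrix (Fin (n i)) (Fin (n j)) ℝ)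
    (H : ∀ i, Matrix (Fin (τ i)) (Fin (n i)) ℝ)
    (Ξ : ∀ i, Matrix (Fin (n i)) (Fin (nb i)) ℝ)
    (Dm : ∀ i, Matrix (Fin (n i)) (Fin (r i)) ℝ)
    (Δ : ∀ i, Matrix (Fin (r i)) (Fin (rb i)) ℝ)
    (E : ∀ i, Set (Fin (n i) → ℝ))
    (W : ∀ i, Set (Fin (r i) → ℝ))
    (hEdual : ∀ i, E i = {x | ∀ t, (H i).mulVec x t ≤ 1})
    (hEgen : ∀ i, E i = {x | ∃ d : Fin (nb i) → ℝ, vecInfNorm d ≤ 1 ∧ x = (Ξ i).mulVec d})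
    (hWgen : ∀ i, W i = {w | ∃ l : Fin (rb i) → ℝ, vecInfNorm l ≤ 1 ∧ w = (Δ i).mulVec l})
    (hgammaSummable : ∀ i,
      Summable (fun k : ℕ => matInfNorm (H i * (A i i) ^ k * PsiMat A Ξ Dm Δ i)))
    (hgamma : ∀ i,
      ∑' k : ℕ, matInfNorm (H i * (A i i) ^ k * PsiMat A Ξ Dm Δ i) < 1) :
    ∃ S : ∀ i, Set (Fin (n i) → ℝ),
      (∀ i, (S i).Nonempty) ∧
      (∀ i, S i ⊆ E i) ∧
      -- `S i` is RPI for `e⁺ = Ā_{ii} e + ṽ`, `ṽ ∈ Ṽ i = (⊕_{j≠i} Ā_{ij} E j) ⊕ D i W i`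
      (∀ i, ∀ x ∈ S i,
        ∀ v ∈ {v : Fin (n i) → ℝ | ∃ (e : ∀ j, Fin (n j) → ℝ) (w : Fin (r i) → ℝ),
            (∀ j ∈ Finset.univ.erase i, e j ∈ E j) ∧ w ∈ W i ∧
            v = (∑ j ∈ Finset.univ.erase i, (A i j).mulVec (e j)) + (Dm i).mulVec w},
          (A i i).mulVec x + v ∈ S i) ∧
      -- the product `S = ∏ i, S i` is RPI for `e⁺ = Ā e + D w`, `w ∈ ∏ i, W i`
      (∀ e : ∀ j, Fin (n j) → ℝ, (∀ j, e j ∈ S j) →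
        ∀ w : ∀ j, Fin (r j) → ℝ, (∀ j, w j ∈ W j) →
          ∀ i, (A i i).mulVec (e i) + (∑ j ∈ Finset.univ.erase i, (A i j).mulVec (e j))
                + (Dm i).mulVec (w i) ∈ S i) := by
  let S i := reachableSet (A i i) (PsiMat A Ξ Dm Δ i)
  have hSE : ∀ i, S i ⊆ E i := fun i => hEdual i ▸
    reachableSet_subset_of_tsum_matInfNorm_le_one (H i) (hgammaSummable i) (hgamma i).le
  have hstep : ∀ i, ∀ x ∈ S i, ∀ (e : ∀ j, Fin (n j) → ℝ) (w : Fin (r i) → ℝ),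
      (∀ j ≠ i, e j ∈ E j) → w ∈ W i →
      A i i *ᵥ x + (∑ j ∈ Finset.univ.erase i, A i j *ᵥ e j + Dm i *ᵥ w) ∈ S i := by
    intro i x hx e w he hw
    obtain ⟨d, hd, hv⟩ := exists_psiMat_mulVec_eq A Ξ Dm Δ i
      (fun j hj => hEgen j ▸ he j hj) (hWgen i ▸ hw)
    rw [hv]
    exact mulVec_add_mulVec_mem_reachableSet hx hd
  refine ⟨S, fun i => ⟨0, zero_mem_reachableSet _ _⟩, hSE, ?_, ?_⟩
  · rintro i x hx _ ⟨e, w, he, hw, rfl⟩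
    exact hstep i x hx e w (fun j hj => he j (Finset.mem_erase.mpr ⟨hj, Finset.mem_univ j⟩)) hw
  · intro e he w hw i
    rw [add_assoc]
    exact hstep i (e i) (he i) e (w i) (fun j _ => hSE j (he j)) (hw i)

/-- Proposition 2: with bounded zonotopic disturbances, the conditions `β i < 1` and
`γ i < 1` guarantee nonempty RPI sets `S i ⊆ E i` for the local error dynamics
`e⁺ = Ā_{ii} e + ṽ`, `ṽ ∈ Ṽ i = (⊕_{j≠i} Ā_{ij} E j) ⊕ D i W i`, whose product is RPI
for the collective dynamics `e⁺ = Ā e + D w`, `w ∈ ∏ i, W i`. -/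
theorem prop2
    (M : ℕ) (hM : 1 ≤ M)
    (n τ nb r rb : Fin M → ℕ)
    (A : ∀ i j : Fin M, Matrix (Fin (n i)) (Fin (n j)) ℝ)
    (H : ∀ i, Matrix (Fin (τ i)) (Fin (n i)) ℝ)
    (Hflat : ∀ i, Matrix (Fin (n i)) (Fin (τ i)) ℝ)
    (Ξ : ∀ i, Matrix (Fin (n i)) (Fin (nb i)) ℝ)
    (Dm : ∀ i, Matrix (Fin (n i)) (Fin (r i)) ℝ)
    (Δ : ∀ i, Matrix (Fin (r i)) (Fin (rb i)) ℝ)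
    (E : ∀ i, Set (Fin (n i) → ℝ))
    (W : ∀ i, Set (Fin (r i) → ℝ))
    (hrank : ∀ i, (H i).rank = n i)
    (hleft : ∀ i, Hflat i * H i = 1)
    (hEdual : ∀ i, E i = {x | ∀ t, (H i).mulVec x t ≤ 1})
    (hEgen : ∀ i, E i = {x | ∃ d : Fin (nb i) → ℝ, vecInfNorm d ≤ 1 ∧ x = (Ξ i).mulVec d})
    (hWgen : ∀ i, W i = {w | ∃ l : Fin (rb i) → ℝ, vecInfNorm l ≤ 1 ∧ w = (Δ i).mulVec l})
    (hSchur : ∀ i, IsSchur (A i i))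
    (hbetaSummable : ∀ i j, j ≠ i →
      Summable (fun k : ℕ => matInfNorm (H i * (A i i) ^ k * A i j * Hflat j)))
    (hbeta : ∀ i,
      ∑ j ∈ Finset.univ.erase i, ∑' k : ℕ,
        matInfNorm (H i * (A i i) ^ k * A i j * Hflat j) < 1)
    (hgammaSummable : ∀ i,
      Summable (fun k : ℕ => matInfNorm (H i * (A i i) ^ k * PsiMat A Ξ Dm Δ i)))
    (hgamma : ∀ i,
      ∑' k : ℕ, matInfNorm (H i * (A i i) ^ k * PsiMat A Ξ Dm Δ i) < 1) :
    ∃ S : ∀ i, Set (Fin (n i) → ℝ),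
      (∀ i, (S i).Nonempty) ∧
      (∀ i, S i ⊆ E i) ∧
      -- `S i` is RPI for `e⁺ = Ā_{ii} e + ṽ`, `ṽ ∈ Ṽ i = (⊕_{j≠i} Ā_{ij} E j) ⊕ D i W i`
      (∀ i, ∀ x ∈ S i,
        ∀ v ∈ {v : Fin (n i) → ℝ | ∃ (e : ∀ j, Fin (n j) → ℝ) (w : Fin (r i) → ℝ),
            (∀ j ∈ Finset.univ.erase i, e j ∈ E j) ∧ w ∈ W i ∧
            v = (∑ j ∈ Finset.univ.erase i, (A i j).mulVec (e j)) + (Dm i).mulVec w},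
          (A i i).mulVec x + v ∈ S i) ∧
      -- the product `S = ∏ i, S i` is RPI for `e⁺ = Ā e + D w`, `w ∈ ∏ i, W i`
      (∀ e : ∀ j, Fin (n j) → ℝ, (∀ j, e j ∈ S j) →
        ∀ w : ∀ j, Fin (r j) → ℝ, (∀ j, w j ∈ W j) →
          ∀ i, (A i i).mulVec (e i) + (∑ j ∈ Finset.univ.erase i, (A i j).mulVec (e j))
                + (Dm i).mulVec (w i) ∈ S i) :=
  prop2_general M n τ nb r rb A H Ξ Dm Δ E W hEdual hEgen hWgen hgammaSummable hgamma
end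
end

section
/- Fix i and matrices Ā_{ii} ∈ ℝ^{n_i×n_i}, Ā_{ij} ∈ ℝ^{n_i×n_j} for j ≠ i, and matrices H_l with full column rank and left inverses H_l^♭ (H_l^♭ H_l = I). Let sequences e_l : ℕ → ℝ^{n_l} satisfy the coupled recursion e_i(t+1) = Ā_{ii} e_i(t) + Σ_{j≠i} Ā_{ij} e_j(t). Assume the series γ_{ij} := Σ_{k=0}^∞ ‖H_i Ā_{ii}^k Ā_{ij} H_j^♭‖_∞ converge. Then for every t ≥ 0, ‖H_i e_i(t)‖_∞ ≤ ‖H_i Ā_{ii}^t H_i^♭‖_∞ · ‖H_i e_i(0)‖_∞ + Σ_{j≠i} γ_{ij} · max_{0 ≤ k ≤ t} ‖H_j e_j(k)‖_∞. -/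
/-!
Variation of constants writes `e_i(t)` as `Ā_ii^t e_i(0)` plus the convolution of the powers
`Ā_ii^k` with the coupling inputs. Inserting `H_j^♭ H_j = 1` turns each input term into the gain
`H_i Ā_ii^k Ā_ij H_j^♭` applied to `H_j e_j`; bounding every `‖H_j e_j‖_∞` by its running maximum
leaves partial sums of the gains, which are dominated by the series `γ_ij`.
-/

open scoped BigOperators
open Matrix

noncomputable section

attribute [local instance] Matrix.linftyOpNormedAddCommGroup

section Norms

variable {m n : Type*} [Fintype m] [Fintype n]

theorem vecInfNorm_eq_norm (v : m → ℝ) : vecInfNorm v = ‖v‖ := by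
  rw [vecInfNorm, Pi.norm_def, Finset.sup_univ_eq_ciSup, NNReal.coe_iSup]
  rfl

theorem matInfNorm_eq_linfty_opNorm (A : Matrix m n ℝ) : matInfNorm A = ‖A‖ := by
  rw [matInfNorm, linfty_opNorm_def, Finset.sup_univ_eq_ciSup, NNReal.coe_iSup]
  push_cast
  rfl

end Norms

theorem Matrix.eq_pow_mulVec_add_sum_pow_mulVec {n R : Type*} [Fintype n] [DecidableEq n]
    [Semiring R] (A : Matrix n n R) (x u : ℕ → n → R) (hx : ∀ t, x (t + 1) = A *ᵥ x t + u t)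
    (t : ℕ) : x t = A ^ t *ᵥ x 0 + ∑ k ∈ Finset.range t, A ^ k *ᵥ u (t - 1 - k) := by
  induction t with
  | zero => simp
  | succ t ih =>
    rw [hx, ih, mulVec_add, mulVec_sum, Finset.sum_range_succ', add_assoc]
    simp only [mulVec_mulVec, ← pow_succ', pow_zero, one_mulVec, add_tsub_cancel_right,
      tsub_zero, Nat.sub_sub, Nat.add_comm 1]

theorem sum_range_sum_mul_le_sum_tsum_mul {ι : Type*} (s : Finset ι) (g : ι → ℕ → ℝ)
    (c : ι → ℝ) (hg : ∀ j ∈ s, ∀ k, 0 ≤ g j k) (hs : ∀ j ∈ s, Summable (g j))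
    (hc : ∀ j ∈ s, 0 ≤ c j) (t : ℕ) :
    ∑ k ∈ Finset.range t, ∑ j ∈ s, g j k * c j ≤ ∑ j ∈ s, (∑' k, g j k) * c j := by
  rw [Finset.sum_comm]
  gcongr with j hj
  rw [← Finset.sum_mul]
  exact mul_le_mul_of_nonneg_right ((hs j hj).sum_le_tsum _ fun k _ => hg j hj k) (hc j hj)

theorem small_gain_estimate_general
    (M : ℕ)
    (n τ : Fin M → ℕ)
    (A : ∀ i j : Fin M, Matrix (Fin (n i)) (Fin (n j)) ℝ)
    (H : ∀ i, Matrix (Fin (τ i)) (Fin (n i)) ℝ)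
    (Hflat : ∀ i, Matrix (Fin (n i)) (Fin (τ i)) ℝ)
    (hleft : ∀ i, Hflat i * H i = 1)
    (e : ∀ l : Fin M, ℕ → (Fin (n l) → ℝ))
    (i : Fin M)
    (hrec : ∀ t : ℕ, e i (t + 1) =
      (A i i).mulVec (e i t) + ∑ j ∈ Finset.univ.erase i, (A i j).mulVec (e j t))
    (hSummable : ∀ j, j ≠ i →
      Summable (fun k : ℕ => matInfNorm (H i * (A i i) ^ k * A i j * Hflat j))) :
    ∀ t : ℕ,
      vecInfNorm ((H i).mulVec (e i t)) ≤
        matInfNorm (H i * (A i i) ^ t * Hflat i) * vecInfNorm ((H i).mulVec (e i 0))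
        + ∑ j ∈ Finset.univ.erase i,
            (∑' k : ℕ, matInfNorm (H i * (A i i) ^ k * A i j * Hflat j))
              * ⨆ k : Fin (t + 1), vecInfNorm ((H j).mulVec (e j k)) := by
  intro t
  simp only [vecInfNorm_eq_norm, matInfNorm_eq_linfty_opNorm] at hSummable ⊢
  set gain : ∀ j, ℕ → Matrix (Fin (τ i)) (Fin (τ j)) ℝ :=
    fun j k => H i * A i i ^ k * A i j * Hflat j
  set peak : Fin M → ℝ := fun j => ⨆ k : Fin (t + 1), ‖H j *ᵥ e j k‖
  have le_peak : ∀ j, ∀ s ≤ t, ‖H j *ᵥ e j s‖ ≤ peak j := fun j s hs =>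
    le_ciSup (f := fun k : Fin (t + 1) => ‖H j *ᵥ e j k‖) (Set.finite_range _).bddAbove
      ⟨s, Nat.lt_succ_of_le hs⟩
  have solution : H i *ᵥ e i t = (H i * A i i ^ t * Hflat i) *ᵥ (H i *ᵥ e i 0)
      + ∑ k ∈ Finset.range t, ∑ j ∈ Finset.univ.erase i,
          gain j k *ᵥ (H j *ᵥ e j (t - 1 - k)) := by
    rw [eq_pow_mulVec_add_sum_pow_mulVec _ _ _ hrec]
    simp only [gain, mulVec_add, mulVec_sum, mulVec_mulVec, Matrix.mul_assoc, hleft,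
      Matrix.mul_one]
  calc ‖H i *ᵥ e i t‖
      ≤ ‖H i * A i i ^ t * Hflat i‖ * ‖H i *ᵥ e i 0‖
        + ∑ k ∈ Finset.range t, ∑ j ∈ Finset.univ.erase i, ‖gain j k‖ * peak j := by
        rw [solution]
        refine (norm_add_le _ _).trans (add_le_add (linfty_opNorm_mulVec _ _) ?_)
        refine (norm_sum_le _ _).trans (Finset.sum_le_sum fun k hk => ?_)
        refine (norm_sum_le _ _).trans (Finset.sum_le_sum fun j _ => ?_)
        exact (linfty_opNorm_mulVec _ _).trans
          (mul_le_mul_of_nonneg_left (le_peak j _ (by omega)) (norm_nonneg _))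
    _ ≤ _ := by
        gcongr
        exact sum_range_sum_mul_le_sum_tsum_mul _ _ _ (fun _ _ _ => norm_nonneg _)
          (fun j hj => hSummable j (Finset.ne_of_mem_erase hj))
          (fun j _ => (norm_nonneg _).trans (le_peak j 0 t.zero_le)) t

/-- Small-gain estimate: along solutions of the coupled error recursion,
`‖H_i e_i(t)‖_∞ ≤ ‖H_i Ā_{ii}^t H_i^♭‖_∞ ‖H_i e_i(0)‖_∞
  + Σ_{j≠i} γ_{ij} max_{0 ≤ k ≤ t} ‖H_j e_j(k)‖_∞`. -/
theorem small_gain_estimate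
    (M : ℕ)
    (n τ : Fin M → ℕ)
    (A : ∀ i j : Fin M, Matrix (Fin (n i)) (Fin (n j)) ℝ)
    (H : ∀ i, Matrix (Fin (τ i)) (Fin (n i)) ℝ)
    (Hflat : ∀ i, Matrix (Fin (n i)) (Fin (τ i)) ℝ)
    (hrank : ∀ i, (H i).rank = n i)
    (hleft : ∀ i, Hflat i * H i = 1)
    (e : ∀ l : Fin M, ℕ → (Fin (n l) → ℝ))
    (i : Fin M)
    (hrec : ∀ t : ℕ, e i (t + 1) =
      (A i i).mulVec (e i t) + ∑ j ∈ Finset.univ.erase i, (A i j).mulVec (e j t))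
    (hSummable : ∀ j, j ≠ i →
      Summable (fun k : ℕ => matInfNorm (H i * (A i i) ^ k * A i j * Hflat j))) :
    ∀ t : ℕ,
      vecInfNorm ((H i).mulVec (e i t)) ≤
        matInfNorm (H i * (A i i) ^ t * Hflat i) * vecInfNorm ((H i).mulVec (e i 0))
        + ∑ j ∈ Finset.univ.erase i,
            (∑' k : ℕ, matInfNorm (H i * (A i i) ^ k * A i j * Hflat j))
              * ⨆ k : Fin (t + 1), vecInfNorm ((H j).mulVec (e j k)) :=
  small_gain_estimate_general M n τ A H Hflat hleft e i hrec hSummable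
end
end
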